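/- arXiv:1804.00101 — 2 statements merged into one kernel-verified Lean document; each statement's English description precedes it below -/
import Mathlib

section
/- Let η > 0 and let A, B be two finite nonempty sets of points in ℝ² that are both indivisible for η. If the convex hulls of A and B intersect, i.e. convexHull(A) ∩ convexHull(B) ≠ ∅, then the set A ∪ B is indivisible for η. -/
noncomputable section

/-- The Euclidean plane. -/
abbrev Plane := EuclideanSpace ℝ (Fin 2)

/-- Perimeter of a bounded set via Cauchy's formula. -/
noncomputable def perim (C : Set Plane) : ℝ :=
  ∫ θ in (0:ℝ)..(2 * Real.pi),
    sSup ((fun p : Plane => p 0 * Real.cos θ + p 1 * Real.sin θ) '' C)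

/-- `P` is a partition of `A` into nonempty clusters. -/
def IsPartition (A : Set Plane) (P : Finset (Set Plane)) : Prop :=
  (∀ C ∈ P, (C : Set Plane).Nonempty) ∧
  (⋃₀ (P : Set (Set Plane)) = A) ∧
  ((P : Set (Set Plane)).PairwiseDisjoint id)

/-- Cost of a partition with opening cost `η` per cluster. -/
noncomputable def cost (η : ℝ) (P : Finset (Set Plane)) : ℝ :=
  η * P.card + ∑ C ∈ P, perim C

/-- `P` is an optimal partition for `(A, η)`. -/
def IsOptimalPartition (η : ℝ) (A : Set Plane) (P : Finset (Set Plane)) : Prop :=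
  IsPartition A P ∧ ∀ Q : Finset (Set Plane), IsPartition A Q → cost η P ≤ cost η Q

/-- `A` is indivisible for `η`: the one-block partition `{A}` is optimal. -/
def Indivisible (η : ℝ) (A : Set Plane) : Prop :=
  IsOptimalPartition η A {A}

/-- A maximal optimal partition of `(A, η)`. -/
def IsMaximalOptimal (η : ℝ) (A : Set Plane) (P : Finset (Set Plane)) : Prop :=
  IsOptimalPartition η A P ∧
  ¬ ∃ Q : Finset (Set Plane), IsOptimalPartition η A Q ∧ Q.card < P.card ∧
      ∀ C ∈ P, ∃ C' ∈ Q, C ⊆ C'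

/-!
The perimeter is the integral over `θ` of the support function
`h_C θ = sup_{p ∈ C} (p₁ cos θ + p₂ sin θ)`, and the support function of a union is the maximum
of the support functions. Hence if `X i ⊆ conv (C i)` for finitely many `i`, then pointwise
`max h_{C i} + ∑ h_{X i} ≤ max h_{X i} + ∑ h_{C i}`, and integrating gives the same inequality
for perimeters.

Let `Q ≠ {A ∪ B}` be a partition of `A ∪ B`. If at least two clusters meet `A`, taking
`X C = C ∩ A` shows that indivisibility of `A` pays for merging them. Otherwise `A` lies in one
cluster and `B` in another, and taking `X C = {x}` for a common point `x` of the two hulls shows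
that merging these two does not increase the perimeter. Either way some merge decreases the
number of clusters without increasing the cost, and induction on that number concludes.
-/

def dirComponent (θ : ℝ) (p : Plane) : ℝ := p 0 * Real.cos θ + p 1 * Real.sin θ

def supportFn (S : Set Plane) (θ : ℝ) : ℝ := sSup (dirComponent θ '' S)

lemma perim_eq_integral_supportFn (S : Set Plane) :
    perim S = ∫ θ in (0:ℝ)..(2 * Real.pi), supportFn S θ := rfl

lemma isLinearMap_dirComponent (θ : ℝ) : IsLinearMap ℝ (dirComponent θ) where
  map_add p q := by simp only [dirComponent, PiLp.add_apply]; ring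
  map_smul c p := by simp only [dirComponent, PiLp.smul_apply, smul_eq_mul]; ring

lemma continuous_dirComponent_left (p : Plane) : Continuous fun θ => dirComponent θ p := by
  unfold dirComponent; fun_prop

section FiniteSet

variable {S T : Set Plane}

lemma dirComponent_le_supportFn (hS : S.Finite) (θ : ℝ) {p : Plane}
    (hp : p ∈ convexHull ℝ S) : dirComponent θ p ≤ supportFn S θ := by
  refine convexHull_min (fun q hq => ?_) (convex_halfSpace_le (isLinearMap_dirComponent θ) _) hp
  exact le_csSup (hS.image (dirComponent θ)).bddAbove (Set.mem_image_of_mem _ hq)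

lemma supportFn_le_of_subset_convexHull (hT : T.Finite) (hS : S.Nonempty)
    (h : S ⊆ convexHull ℝ T) (θ : ℝ) : supportFn S θ ≤ supportFn T θ :=
  csSup_le (hS.image _) <| Set.forall_mem_image.2 fun _ hp => dirComponent_le_supportFn hT θ (h hp)

lemma supportFn_mono (hT : T.Finite) (hS : S.Nonempty) (h : S ⊆ T) (θ : ℝ) :
    supportFn S θ ≤ supportFn T θ :=
  supportFn_le_of_subset_convexHull hT hS (h.trans (subset_convexHull ℝ T)) θ

lemma supportFn_eq_sup' (hS : S.Finite) (hne : S.Nonempty) :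
    supportFn S = fun θ => hS.toFinset.sup' (hS.toFinset_nonempty.2 hne) (dirComponent θ) := by
  ext θ
  rw [supportFn, Finset.sup'_eq_csSup_image, hS.coe_toFinset]

lemma continuous_supportFn (hS : S.Finite) (hne : S.Nonempty) : Continuous (supportFn S) := by
  rw [supportFn_eq_sup' hS hne]
  exact Continuous.finset_sup'_apply _ fun p _ => continuous_dirComponent_left p

end FiniteSet

lemma supportFn_biUnion {ι : Type*} {s : Finset ι} (hs : s.Nonempty) {C : ι → Set Plane}
    (hfin : ∀ i ∈ s, (C i).Finite) (hne : ∀ i ∈ s, (C i).Nonempty) (θ : ℝ) :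
    supportFn (⋃ i ∈ s, C i) θ = s.sup' hs fun i => supportFn (C i) θ := by
  have hUfin : (⋃ i ∈ s, C i).Finite := s.finite_toSet.biUnion hfin
  apply le_antisymm
  · obtain ⟨i, hi⟩ := hs
    refine csSup_le (((hne i hi).mono (Set.subset_biUnion_of_mem (u := C) hi)).image _) ?_
    rintro _ ⟨p, hp, rfl⟩
    obtain ⟨j, hj, hpj⟩ := Set.mem_iUnion₂.1 hp
    exact (dirComponent_le_supportFn (hfin j hj) θ (subset_convexHull ℝ _ hpj)).trans
      (Finset.le_sup' (fun i => supportFn (C i) θ) hj)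
  · exact Finset.sup'_le _ _ fun i hi =>
      supportFn_mono hUfin (hne i hi) (Set.subset_biUnion_of_mem (u := C) hi) θ

lemma perim_singleton (x : Plane) : perim {x} = 0 := by
  have hx : ∀ θ, supportFn {x} θ = x 0 * Real.cos θ + x 1 * Real.sin θ := fun θ => by
    rw [supportFn, Set.image_singleton, csSup_singleton, dirComponent]
  simp only [perim_eq_integral_supportFn, hx]
  rw [intervalIntegral.integral_add (Continuous.intervalIntegrable (by fun_prop) _ _)
      (Continuous.intervalIntegrable (by fun_prop) _ _),
    intervalIntegral.integral_const_mul, intervalIntegral.integral_const_mul, integral_cos,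
    integral_sin]
  simp

lemma Finset.sup'_add_sum_le_sup'_add_sum {ι α : Type*} [AddCommMonoid α] [LinearOrder α]
    [IsOrderedAddMonoid α] {s : Finset ι} (hs : s.Nonempty) {u v : ι → α}
    (huv : ∀ i ∈ s, u i ≤ v i) :
    s.sup' hs v + ∑ i ∈ s, u i ≤ s.sup' hs u + ∑ i ∈ s, v i := by
  classical
  obtain ⟨j, hj, hvj⟩ := Finset.exists_mem_eq_sup' hs v
  rw [hvj, ← Finset.add_sum_erase s u hj, ← Finset.add_sum_erase s v hj, add_left_comm]
  gcongr with i hi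
  · exact Finset.le_sup' u hj
  · exact huv i (Finset.mem_of_mem_erase hi)

theorem perim_biUnion_add_sum_le {ι : Type*} {s : Finset ι} (hs : s.Nonempty)
    {C X : ι → Set Plane} (hCfin : ∀ i ∈ s, (C i).Finite) (hCne : ∀ i ∈ s, (C i).Nonempty)
    (hXfin : ∀ i ∈ s, (X i).Finite) (hXne : ∀ i ∈ s, (X i).Nonempty)
    (hXC : ∀ i ∈ s, X i ⊆ convexHull ℝ (C i)) :
    perim (⋃ i ∈ s, C i) + ∑ i ∈ s, perim (X i) ≤
      perim (⋃ i ∈ s, X i) + ∑ i ∈ s, perim (C i) := by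
  have hC := fun i hi => continuous_supportFn (hCfin i hi) (hCne i hi)
  have hX := fun i hi => continuous_supportFn (hXfin i hi) (hXne i hi)
  have hsupC := Continuous.finset_sup'_apply hs hC
  have hsupX := Continuous.finset_sup'_apply hs hX
  have hsumC := continuous_finsetSum s hC
  have hsumX := continuous_finsetSum s hX
  simp only [perim_eq_integral_supportFn]
  rw [intervalIntegral.integral_congr fun θ _ => supportFn_biUnion hs hCfin hCne θ,
    intervalIntegral.integral_congr fun θ _ => supportFn_biUnion hs hXfin hXne θ,
    ← intervalIntegral.integral_finsetSum fun i hi => (hC i hi).intervalIntegrable _ _,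
    ← intervalIntegral.integral_finsetSum fun i hi => (hX i hi).intervalIntegrable _ _,
    ← intervalIntegral.integral_add (hsupC.intervalIntegrable _ _) (hsumX.intervalIntegrable _ _),
    ← intervalIntegral.integral_add (hsupX.intervalIntegrable _ _) (hsumC.intervalIntegrable _ _)]
  refine intervalIntegral.integral_mono_on (by positivity)
    ((hsupC.add hsumX).intervalIntegrable _ _) ((hsupX.add hsumC).intervalIntegrable _ _)
    fun θ _ => Finset.sup'_add_sum_le_sup'_add_sum hs fun i hi =>
      supportFn_le_of_subset_convexHull (hCfin i hi) (hXne i hi) (hXC i hi) θ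

lemma perim_union_le_of_mem_convexHull {C₁ C₂ : Set Plane} (h₁ : C₁.Finite) (h₂ : C₂.Finite)
    (h₁ne : C₁.Nonempty) (h₂ne : C₂.Nonempty) {x : Plane} (hx₁ : x ∈ convexHull ℝ C₁)
    (hx₂ : x ∈ convexHull ℝ C₂) :
    perim (C₁ ∪ C₂) ≤ perim C₁ + perim C₂ := by
  have key := perim_biUnion_add_sum_le (s := Finset.univ) (C := fun b => cond b C₁ C₂)
    (X := fun _ => {x}) Finset.univ_nonempty (by simp [h₁, h₂]) (by simp [h₁ne, h₂ne])
    (by simp) (by simp) (by simp [hx₁, hx₂])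
  rw [Set.union_eq_iUnion]
  simpa [perim_singleton, add_comm] using key

section Partition

variable {E A : Set Plane} {Q : Finset (Set Plane)} {C C' : Set Plane}

lemma IsPartition.subset (hQ : IsPartition E Q) (hC : C ∈ Q) : C ⊆ E :=
  hQ.2.1 ▸ Set.subset_sUnion_of_mem hC

lemma IsPartition.exists_mem (hQ : IsPartition E Q) {x : Plane} (hx : x ∈ E) :
    ∃ C ∈ Q, x ∈ C := by
  rw [← hQ.2.1] at hx
  simpa using hx

lemma IsPartition.eq_of_mem (hQ : IsPartition E Q) (hC : C ∈ Q) (hC' : C' ∈ Q) {x : Plane}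
    (hx : x ∈ C) (hx' : x ∈ C') : C = C' :=
  hQ.2.2.elim hC hC' (Set.not_disjoint_iff.2 ⟨x, hx, hx'⟩)

lemma isPartition_singleton (hE : E.Nonempty) : IsPartition E {E} :=
  ⟨by simpa using hE, by simp, by simp⟩

lemma Indivisible.nonempty {η : ℝ} (h : Indivisible η A) : A.Nonempty :=
  h.1.1 A (Finset.mem_singleton_self A)

lemma IsPartition.eq_singleton (hQ : IsPartition E Q) (hC : C ∈ Q) (hEC : E ⊆ C) : Q = {E} := by
  have hCE : C = E := (hQ.subset hC).antisymm hEC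
  refine Finset.eq_singleton_iff_unique_mem.2 ⟨hCE ▸ hC, fun C' hC' => ?_⟩
  obtain ⟨x, hx⟩ := hQ.1 C' hC'
  rw [← hCE]
  exact hQ.eq_of_mem hC' hC hx (hEC (hQ.subset hC' hx))

end Partition

section Merge

variable {η : ℝ} {E : Set Plane} {Q D : Finset (Set Plane)}

lemma IsPartition.sUnion_notMem_sdiff (hQ : IsPartition E Q) (hDQ : D ⊆ Q) (hD : D.Nonempty) :
    ⋃₀ ↑D ∉ Q \ D := by
  intro hU
  obtain ⟨C, hC⟩ := hD
  obtain ⟨x, hx⟩ := hQ.1 C (hDQ hC)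
  have hCU : C = ⋃₀ ↑D :=
    hQ.eq_of_mem (hDQ hC) (Finset.mem_sdiff.1 hU).1 hx (Set.mem_sUnion_of_mem hx hC)
  exact (Finset.mem_sdiff.1 hU).2 (hCU ▸ hC)

lemma IsPartition.merge (hQ : IsPartition E Q) (hDQ : D ⊆ Q) (hD : D.Nonempty) :
    IsPartition E (insert (⋃₀ ↑D) (Q \ D)) := by
  refine ⟨?_, ?_, ?_⟩
  · simp only [Finset.forall_mem_insert, Finset.mem_sdiff]
    obtain ⟨C, hC⟩ := hD
    exact ⟨(hQ.1 C (hDQ hC)).mono (Set.subset_sUnion_of_mem hC), fun C hC => hQ.1 C hC.1⟩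
  · rw [Finset.coe_insert, Set.sUnion_insert, Finset.coe_sdiff, ← Set.sUnion_union,
      Set.union_sdiff_cancel (Finset.coe_subset.2 hDQ), hQ.2.1]
  · rw [Finset.coe_insert, Finset.coe_sdiff]
    refine (hQ.2.2.subset Set.sdiff_subset).insert fun C hC _ => ?_
    refine Set.disjoint_sUnion_left.2 fun C' hC' => hQ.2.2 (hDQ hC') hC.1 ?_
    rintro rfl
    exact hC.2 hC'

lemma IsPartition.cost_merge (hQ : IsPartition E Q) (hDQ : D ⊆ Q) (hD : D.Nonempty) :
    cost η (insert (⋃₀ ↑D) (Q \ D)) + (∑ C ∈ D, perim C + ((D.card : ℝ) - 1) * η) =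
      cost η Q + perim (⋃₀ ↑D) := by
  have hU := hQ.sUnion_notMem_sdiff hDQ hD
  rw [cost, cost, Finset.sum_insert hU, Finset.card_insert_of_notMem hU,
    Finset.card_sdiff_of_subset hDQ, ← Finset.sum_sdiff hDQ,
    Nat.cast_add, Nat.cast_sub (Finset.card_le_card hDQ)]
  ring

lemma IsPartition.exists_merge (hQ : IsPartition E Q) (hDQ : D ⊆ Q) (hD : 2 ≤ D.card)
    (hperim : perim (⋃₀ ↑D) ≤ ∑ C ∈ D, perim C + ((D.card : ℝ) - 1) * η) :
    ∃ R, IsPartition E R ∧ R.card < Q.card ∧ cost η R ≤ cost η Q := by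
  have hDne : D.Nonempty := Finset.card_pos.1 (by omega)
  refine ⟨_, hQ.merge hDQ hDne, ?_, by linarith [hQ.cost_merge (η := η) hDQ hDne]⟩
  rw [Finset.card_insert_of_notMem (hQ.sUnion_notMem_sdiff hDQ hDne),
    Finset.card_sdiff_of_subset hDQ]
  have := Finset.card_le_card hDQ
  omega

theorem indivisible_of_forall_exists_merge (hE : E.Nonempty)
    (h : ∀ Q, IsPartition E Q → Q ≠ {E} → ∃ D ⊆ Q, 2 ≤ D.card ∧
      perim (⋃₀ ↑D) ≤ ∑ C ∈ D, perim C + ((D.card : ℝ) - 1) * η) :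
    Indivisible η E := by
  refine ⟨isPartition_singleton hE, fun Q hQ => ?_⟩
  induction hn : Q.card using Nat.strong_induction_on generalizing Q with
  | _ n ih =>
    by_cases hQE : Q = {E}
    · rw [hQE]
    obtain ⟨D, hDQ, hD, hperim⟩ := h Q hQ hQE
    obtain ⟨R, hR, hRQ, hcost⟩ := hQ.exists_merge hDQ hD hperim
    exact (ih _ (hn ▸ hRQ) R hR rfl).trans hcost

end Merge

open scoped Classical in
def clustersMeeting (Q : Finset (Set Plane)) (A : Set Plane) : Finset (Set Plane) :=
  {C ∈ Q | (C ∩ A).Nonempty}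

section Trace

variable {η : ℝ} {E A : Set Plane} {Q : Finset (Set Plane)}

lemma mem_clustersMeeting {C : Set Plane} :
    C ∈ clustersMeeting Q A ↔ C ∈ Q ∧ (C ∩ A).Nonempty := by
  simp [clustersMeeting]

lemma clustersMeeting_subset : clustersMeeting Q A ⊆ Q := fun _ hC =>
  (mem_clustersMeeting.1 hC).1

lemma IsPartition.injOn_inter (hQ : IsPartition E Q) :
    Set.InjOn (· ∩ A) ↑(clustersMeeting Q A) := by
  intro C₁ h₁ C₂ h₂ heq
  obtain ⟨hC₁, x, hx⟩ := mem_clustersMeeting.1 h₁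
  have hx₂ : x ∈ C₂ ∩ A := (show C₁ ∩ A = C₂ ∩ A from heq) ▸ hx
  exact hQ.eq_of_mem hC₁ (mem_clustersMeeting.1 h₂).1 hx.1 hx₂.1

lemma IsPartition.biUnion_clustersMeeting_inter (hQ : IsPartition E Q) (hAE : A ⊆ E) :
    ⋃ C ∈ clustersMeeting Q A, C ∩ A = A := by
  refine Set.Subset.antisymm (Set.iUnion₂_subset fun _ _ => Set.inter_subset_right) fun x hx => ?_
  obtain ⟨C, hC, hxC⟩ := hQ.exists_mem (hAE hx)
  exact Set.mem_biUnion (mem_clustersMeeting.2 ⟨hC, x, hxC, hx⟩) ⟨hxC, hx⟩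

lemma IsPartition.image_inter (hQ : IsPartition E Q) (hAE : A ⊆ E) :
    IsPartition A ((clustersMeeting Q A).image (· ∩ A)) := by
  refine ⟨?_, ?_, ?_⟩
  · simp only [Finset.forall_mem_image]
    exact fun C hC => (mem_clustersMeeting.1 hC).2
  · rw [Finset.coe_image, Set.sUnion_image, Finset.set_biUnion_coe,
      hQ.biUnion_clustersMeeting_inter hAE]
  · rw [Finset.coe_image]
    rintro _ ⟨C₁, h₁, rfl⟩ _ ⟨C₂, h₂, rfl⟩ hne
    refine (hQ.2.2 (clustersMeeting_subset h₁) (clustersMeeting_subset h₂) ?_).mono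
      Set.inter_subset_left Set.inter_subset_left
    rintro rfl
    exact hne rfl

lemma IsPartition.perim_sUnion_clustersMeeting_le (hE : E.Finite) (hQ : IsPartition E Q)
    (hAE : A ⊆ E) (hA : Indivisible η A) :
    perim (⋃₀ ↑(clustersMeeting Q A)) ≤
      ∑ C ∈ clustersMeeting Q A, perim C + (((clustersMeeting Q A).card : ℝ) - 1) * η := by
  set D := clustersMeeting Q A
  have hDQ : D ⊆ Q := clustersMeeting_subset
  have hD : D.Nonempty := by
    obtain ⟨a, ha⟩ := hA.nonempty
    obtain ⟨C, hC, haC⟩ := hQ.exists_mem (hAE ha)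
    exact ⟨C, mem_clustersMeeting.2 ⟨hC, a, haC, ha⟩⟩
  have hfin : ∀ C ∈ D, C.Finite := fun C hC => hE.subset (hQ.subset (hDQ hC))
  have key := perim_biUnion_add_sum_le (C := id) (X := (· ∩ A)) hD hfin
    (fun C hC => hQ.1 C (hDQ hC)) (fun C hC => (hfin C hC).subset Set.inter_subset_left)
    (fun C hC => (mem_clustersMeeting.1 hC).2)
    (fun C _ => Set.inter_subset_left.trans (subset_convexHull ℝ C))
  have hopt := hA.2 _ (hQ.image_inter hAE)
  rw [cost, cost, Finset.card_image_of_injOn hQ.injOn_inter,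
    Finset.sum_image fun _ h₁ _ h₂ h => hQ.injOn_inter h₁ h₂ h] at hopt
  have hUA : ⋃ C ∈ D, C ∩ A = A := hQ.biUnion_clustersMeeting_inter hAE
  simp only [id, hUA] at key
  rw [Set.sUnion_eq_biUnion, Finset.set_biUnion_coe]
  simp only [Finset.card_singleton, Finset.sum_singleton, Nat.cast_one] at hopt
  linarith

lemma IsPartition.exists_superset (hQ : IsPartition E Q) (hAE : A ⊆ E) (hA : A.Nonempty)
    (h : (clustersMeeting Q A).card ≤ 1) : ∃ C ∈ Q, A ⊆ C := by
  obtain ⟨a, ha⟩ := hA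
  obtain ⟨C, hC, haC⟩ := hQ.exists_mem (hAE ha)
  refine ⟨C, hC, fun b hb => ?_⟩
  obtain ⟨C', hC', hbC'⟩ := hQ.exists_mem (hAE hb)
  rwa [Finset.card_le_one.1 h C (mem_clustersMeeting.2 ⟨hC, a, haC, ha⟩) C'
    (mem_clustersMeeting.2 ⟨hC', b, hbC', hb⟩)]

end Trace

theorem union_indivisible_of_hulls_intersect_general
    (η : ℝ) (hη : 0 < η)
    (A B : Set Plane) (hA : A.Finite)
    (hB : B.Finite)
    (hAind : Indivisible η A) (hBind : Indivisible η B)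
    (hint : (convexHull ℝ A ∩ convexHull ℝ B).Nonempty) :
    Indivisible η (A ∪ B) := by
  have hAB : (A ∪ B).Finite := hA.union hB
  refine indivisible_of_forall_exists_merge (hAind.nonempty.mono Set.subset_union_left)
    fun Q hQ hQAB => ?_
  by_cases hQA : 2 ≤ (clustersMeeting Q A).card
  · exact ⟨_, clustersMeeting_subset, hQA,
      hQ.perim_sUnion_clustersMeeting_le hAB Set.subset_union_left hAind⟩
  by_cases hQB : 2 ≤ (clustersMeeting Q B).card
  · exact ⟨_, clustersMeeting_subset, hQB,
      hQ.perim_sUnion_clustersMeeting_le hAB Set.subset_union_right hBind⟩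
  obtain ⟨CA, hCA, hACA⟩ := hQ.exists_superset Set.subset_union_left hAind.nonempty (by omega)
  obtain ⟨CB, hCB, hBCB⟩ := hQ.exists_superset Set.subset_union_right hBind.nonempty (by omega)
  have hne : CA ≠ CB := by
    rintro rfl
    exact hQAB (hQ.eq_singleton hCA (Set.union_subset hACA hBCB))
  obtain ⟨x, hxA, hxB⟩ := hint
  have hperim := perim_union_le_of_mem_convexHull (hAB.subset (hQ.subset hCA))
    (hAB.subset (hQ.subset hCB)) (hQ.1 CA hCA) (hQ.1 CB hCB) (convexHull_mono hACA hxA)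
    (convexHull_mono hBCB hxB)
  refine ⟨{CA, CB}, Finset.insert_subset hCA (Finset.singleton_subset_iff.2 hCB),
    (Finset.card_pair hne).ge, ?_⟩
  rw [Finset.card_pair hne, Finset.sum_pair hne, Finset.coe_pair, Set.sUnion_pair]
  push_cast
  linarith

/-- the union of two indivisible sets with intersecting convex hulls
is indivisible. -/
theorem union_indivisible_of_hulls_intersect
    (η : ℝ) (hη : 0 < η)
    (A B : Set Plane) (hA : A.Finite) (hAne : A.Nonempty)
    (hB : B.Finite) (hBne : B.Nonempty)
    (hAind : Indivisible η A) (hBind : Indivisible η B)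
    (hint : (convexHull ℝ A ∩ convexHull ℝ B).Nonempty) :
    Indivisible η (A ∪ B) :=
  union_indivisible_of_hulls_intersect_general η hη A B hA hB hAind hBind hint

end
end

section
/- Let A be a finite nonempty set of points in ℝ² and let η > 0. Then (A, η) has exactly one maximal optimal partition: a maximal optimal partition of (A, η) exists, and any two maximal optimal partitions of (A, η) are equal. -/
/-!
The support function of a finite union is the pointwise maximum of the support functions of
its parts. So if every block `C` of a family `I` meets `D`, then
`h(⋃ I) + ∑_{C ∈ I} h(D ∩ C) ≤ ∑_{C ∈ I} h(C) + h(D)`: in each direction the maximum is attained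
on some `C₀ ∈ I`; compare `⋃ I` with `C₀`, `D ∩ C₀` with `D`, and `D ∩ C` with `C` otherwise.

Let `P, Q` be optimal and `D ∈ Q` lie in no block of `P`. Merge the blocks `I` of `P` meeting `D`
into one, and cut `D` into the pieces `D ∩ C`, `C ∈ I`. The opening costs of the two new
partitions change by `-(|I| - 1)` and `+(|I| - 1)`, and by the inequality above their
perimeters sum to at most those of `P` and `Q`. As `Q` is optimal, the merged partition is
optimal, coarser than `P`, and has fewer blocks. Hence every block of an optimal partition lies
in a block of each maximal optimal partition, so two maximal optimal partitions refine each
other and coincide. An optimal partition with the fewest blocks is maximal.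
-/

noncomputable section

open Finset Classical

theorem sSup_image_sUnion_add_sum_le {α : Type*} (f : α → ℝ) {I : Finset (Set α)} {D : Set α}
    (hIne : I.Nonempty) (hI : ∀ C ∈ I, C.Finite) (hD : D.Finite)
    (hmeet : ∀ C ∈ I, (D ∩ C).Nonempty) :
    sSup (f '' ⋃₀ ↑I) + ∑ C ∈ I, sSup (f '' (D ∩ C)) ≤ ∑ C ∈ I, sSup (f '' C) + sSup (f '' D) := by
  have hW : (⋃₀ (I : Set (Set α))).Finite := Set.Finite.sUnion I.finite_toSet hI
  have hWne : (⋃₀ (I : Set (Set α))).Nonempty := by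
    obtain ⟨C, hC⟩ := hIne
    exact (hmeet C hC).mono (Set.inter_subset_right.trans (Set.subset_sUnion_of_mem hC))
  obtain ⟨p, hpW, hp⟩ := (hWne.image f).csSup_mem (hW.image f)
  obtain ⟨C₀, hC₀, hpC₀⟩ := Set.mem_sUnion.1 hpW
  have hunion : sSup (f '' ⋃₀ ↑I) ≤ sSup (f '' C₀) :=
    hp ▸ le_csSup ((hI C₀ hC₀).image f).bddAbove ⟨p, hpC₀, rfl⟩
  have hmono : ∀ {B B' : Set α}, B ⊆ B' → B.Nonempty → B'.Finite →
      sSup (f '' B) ≤ sSup (f '' B') := fun hBB' hB hB' =>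
    csSup_le_csSup (hB'.image f).bddAbove (hB.image f) (Set.image_mono hBB')
  have hrest : ∑ C ∈ I.erase C₀, sSup (f '' (D ∩ C)) ≤ ∑ C ∈ I.erase C₀, sSup (f '' C) :=
    sum_le_sum fun C hC => hmono Set.inter_subset_right (hmeet C (mem_of_mem_erase hC))
      (hI C (mem_of_mem_erase hC))
  rw [← add_sum_erase I _ hC₀, ← add_sum_erase I _ hC₀]
  linarith [hmono Set.inter_subset_left (hmeet C₀ hC₀) hD]

/-- The integrand in Cauchy's formula for `perim`, i.e. the support function of `C` in
direction `θ` (equal to `0` for `C = ∅`). -/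
def supportFun (C : Set Plane) (θ : ℝ) : ℝ :=
  sSup ((fun p : Plane => p 0 * Real.cos θ + p 1 * Real.sin θ) '' C)

theorem perim_eq_integral_supportFun (C : Set Plane) :
    perim C = ∫ θ in (0 : ℝ)..(2 * Real.pi), supportFun C θ := rfl

theorem continuous_supportFun {C : Set Plane} (hC : C.Finite) : Continuous (supportFun C) := by
  rcases C.eq_empty_or_nonempty with rfl | hne
  · have h : supportFun ∅ = fun _ => 0 := by
      ext θ
      simp [supportFun]
    exact h ▸ continuous_const
  · have hne' : hC.toFinset.Nonempty := hC.toFinset_nonempty.2 hne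
    have h : supportFun C = fun θ => hC.toFinset.sup' hne'
        (fun p : Plane => p 0 * Real.cos θ + p 1 * Real.sin θ) := by
      ext θ
      rw [sup'_eq_csSup_image, hC.coe_toFinset, supportFun]
    rw [h]
    exact Continuous.finset_sup'_apply hne' fun p _ => by fun_prop

theorem perim_sUnion_add_sum_perim_inter_le {I : Finset (Set Plane)} {D : Set Plane}
    (hIne : I.Nonempty) (hI : ∀ C ∈ I, C.Finite) (hD : D.Finite)
    (hmeet : ∀ C ∈ I, (D ∩ C).Nonempty) :
    perim (⋃₀ ↑I) + ∑ C ∈ I, perim (D ∩ C) ≤ ∑ C ∈ I, perim C + perim D := by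
  have hc : ∀ {C : Set Plane}, C.Finite → Continuous (supportFun C) := continuous_supportFun
  have hW : (⋃₀ (I : Set (Set Plane))).Finite := Set.Finite.sUnion I.finite_toSet hI
  have hDC : ∀ C ∈ I, (D ∩ C).Finite := fun C _ => hD.inter_of_left C
  have hsumDC := continuous_finsetSum I fun C hC => hc (hDC C hC)
  have hsumC := continuous_finsetSum I fun C hC => hc (hI C hC)
  simp only [perim_eq_integral_supportFun]
  rw [← intervalIntegral.integral_finsetSum fun C hC => (hc (hDC C hC)).intervalIntegrable _ _,
    ← intervalIntegral.integral_finsetSum fun C hC => (hc (hI C hC)).intervalIntegrable _ _,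
    ← intervalIntegral.integral_add ((hc hW).intervalIntegrable _ _)
      (hsumDC.intervalIntegrable _ _),
    ← intervalIntegral.integral_add (hsumC.intervalIntegrable _ _)
      ((hc hD).intervalIntegrable _ _)]
  exact intervalIntegral.integral_mono_on (by positivity)
    (((hc hW).add hsumDC).intervalIntegrable _ _) ((hsumC.add (hc hD)).intervalIntegrable _ _)
    fun θ _ => sSup_image_sUnion_add_sum_le _ hIne hI hD hmeet

namespace IsPartition

variable {A B : Set Plane} {P Q I R : Finset (Set Plane)} {C C' D : Set Plane}

theorem subset_of_mem (hP : IsPartition A P) (hC : C ∈ P) : C ⊆ A :=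
  hP.2.1 ▸ Set.subset_sUnion_of_mem hC

theorem eq_of_mem_of_mem (hP : IsPartition A P) (hC : C ∈ P) (hC' : C' ∈ P) {x : Plane}
    (hx : x ∈ C) (hx' : x ∈ C') : C = C' :=
  hP.2.2.elim (mem_coe.2 hC) (mem_coe.2 hC') (Set.not_disjoint_iff.2 ⟨x, hx, hx'⟩)

theorem exists_mem_s4 (hP : IsPartition A P) {x : Plane} (hx : x ∈ A) : ∃ C ∈ P, x ∈ C :=
  Set.mem_sUnion.1 (hP.2.1 ▸ hx)

theorem singleton (hA : A.Nonempty) : IsPartition A {A} :=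
  ⟨fun C hC => mem_singleton.1 hC ▸ hA, by simp, by simp⟩

theorem disjoint_sUnion_of_mem_sdiff (hP : IsPartition A P) (hI : I ⊆ P) (hC : C ∈ P \ I) :
    Disjoint C (⋃₀ ↑I) := by
  refine Set.disjoint_sUnion_right.2 fun E hE => hP.2.2 (mem_sdiff.1 hC).1 (hI hE) ?_
  rintro rfl
  exact (mem_sdiff.1 hC).2 hE

theorem sdiff_union (hP : IsPartition A P) (hI : I ⊆ P) (hR : IsPartition (⋃₀ ↑I) R) :
    IsPartition A (P \ I ∪ R) := by
  refine ⟨fun C hC => ?_, ?_, ?_⟩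
  · rcases mem_union.1 hC with hC | hC
    · exact hP.1 C (mem_sdiff.1 hC).1
    · exact hR.1 C hC
  · rw [coe_union, Set.sUnion_union, hR.2.1, ← Set.sUnion_union, ← coe_union,
      sdiff_union_of_subset hI, hP.2.1]
  · rw [coe_union, Set.pairwiseDisjoint_union]
    refine ⟨hP.2.2.subset (by simp), hR.2.2, fun C hC E hE _ => ?_⟩
    exact (hP.disjoint_sUnion_of_mem_sdiff hI hC).mono_right (hR.subset_of_mem hE)

theorem disjoint_sdiff (hP : IsPartition A P) (hI : I ⊆ P) (hR : IsPartition (⋃₀ ↑I) R) :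
    Disjoint (P \ I) R := by
  refine disjoint_left.2 fun E hEP hER => ?_
  obtain ⟨x, hx⟩ := hR.1 E hER
  exact (hP.disjoint_sUnion_of_mem_sdiff hI hEP).notMem_of_mem_left hx (hR.subset_of_mem hER hx)

theorem trace (hP : IsPartition A P) (hD : D ⊆ A) :
    IsPartition D ((P.filter fun C => (D ∩ C).Nonempty).image (D ∩ ·)) := by
  refine ⟨fun E hE => ?_, ?_, fun E hE E' hE' hne => ?_⟩
  · obtain ⟨C, hC, rfl⟩ := mem_image.1 hE
    exact (mem_filter.1 hC).2
  · refine subset_antisymm (Set.sUnion_subset fun E hE => ?_) fun x hx => ?_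
    · obtain ⟨C, -, rfl⟩ := mem_image.1 hE
      exact Set.inter_subset_left
    · obtain ⟨C, hC, hxC⟩ := hP.exists_mem_s4 (hD hx)
      exact ⟨D ∩ C, mem_image_of_mem _ (mem_filter.2 ⟨hC, x, hx, hxC⟩), hx, hxC⟩
  · obtain ⟨C, hC, rfl⟩ := mem_image.1 hE
    obtain ⟨C', hC', rfl⟩ := mem_image.1 hE'
    have hCC' : C ≠ C' := fun h => hne (h ▸ rfl)
    exact (hP.2.2 (mem_filter.1 hC).1 (mem_filter.1 hC').1 hCC').mono
      Set.inter_subset_right Set.inter_subset_right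

theorem injOn_inter_s4 (hP : IsPartition A P) (D : Set Plane) :
    Set.InjOn (D ∩ ·) ↑(P.filter fun C => (D ∩ C).Nonempty) := by
  intro C hC C' hC' h
  obtain ⟨x, hxD, hxC⟩ := (mem_filter.1 hC).2
  have hxC' : x ∈ D ∩ C' := (show D ∩ C = D ∩ C' from h) ▸ ⟨hxD, hxC⟩
  exact hP.eq_of_mem_of_mem (mem_filter.1 hC).1 (mem_filter.1 hC').1 hxC hxC'.2

theorem subset_of_forall_exists_subset (hP : IsPartition A P)
    (hPQ : ∀ C ∈ P, ∃ D ∈ Q, C ⊆ D) (hQP : ∀ D ∈ Q, ∃ C ∈ P, D ⊆ C) : P ⊆ Q := by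
  intro C hC
  obtain ⟨D, hD, hCD⟩ := hPQ C hC
  obtain ⟨C', hC', hDC'⟩ := hQP D hD
  obtain ⟨x, hx⟩ := hP.1 C hC
  have hCC' : C = C' := hP.eq_of_mem_of_mem hC hC' hx (hDC' (hCD hx))
  exact subset_antisymm hCD (hCC' ▸ hDC') ▸ hD

theorem eq_of_forall_exists_subset (hP : IsPartition A P) (hQ : IsPartition B Q)
    (hPQ : ∀ C ∈ P, ∃ D ∈ Q, C ⊆ D) (hQP : ∀ D ∈ Q, ∃ C ∈ P, D ⊆ C) : P = Q :=
  subset_antisymm (subset_of_forall_exists_subset hP hPQ hQP)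
    (subset_of_forall_exists_subset hQ hQP hPQ)

theorem finite_setOf (hA : A.Finite) : {P : Finset (Set Plane) | IsPartition A P}.Finite := by
  have hblocks : {s : Set (Set Plane) | s ⊆ {C | C ⊆ A}}.Finite :=
    hA.finite_subsets.finite_subsets
  refine (hblocks.preimage coe_injective.injOn).subset fun P hP C hC => ?_
  exact IsPartition.subset_of_mem hP hC

end IsPartition

section Cost

variable {η : ℝ} {A : Set Plane} {P Q I R : Finset (Set Plane)}

theorem cost_union {S T : Finset (Set Plane)} (h : Disjoint S T) :
    cost η (S ∪ T) = cost η S + cost η T := by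
  simp only [cost, card_union_of_disjoint h, sum_union h, Nat.cast_add]
  ring

theorem cost_sdiff_add (h : I ⊆ P) : cost η (P \ I) + cost η I = cost η P := by
  rw [← cost_union disjoint_sdiff_self_left, sdiff_union_of_subset h]

theorem cost_singleton (C : Set Plane) : cost η {C} = η + perim C := by
  simp [cost]

theorem cost_image_of_injOn {f : Set Plane → Set Plane} (hf : Set.InjOn f I) :
    cost η (I.image f) = η * I.card + ∑ C ∈ I, perim (f C) := by
  rw [cost, card_image_of_injOn hf, sum_image hf]

theorem IsPartition.cost_sdiff_union (hP : IsPartition A P) (hI : I ⊆ P)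
    (hR : IsPartition (⋃₀ ↑I) R) : cost η (P \ I ∪ R) + cost η I = cost η P + cost η R := by
  rw [cost_union (hP.disjoint_sdiff hI hR), add_right_comm, cost_sdiff_add hI]

end Cost

variable {η : ℝ} {A : Set Plane} {P Q : Finset (Set Plane)}

theorem IsOptimalPartition.exists_coarser_of_not_subset (hA : A.Finite)
    (hP : IsOptimalPartition η A P) (hQ : IsOptimalPartition η A Q) {D : Set Plane} (hD : D ∈ Q)
    (hDP : ∀ C ∈ P, ¬ D ⊆ C) :
    ∃ P' : Finset (Set Plane), IsOptimalPartition η A P' ∧ P'.card < P.card ∧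
      ∀ C ∈ P, ∃ C' ∈ P', C ⊆ C' := by
  set I := P.filter fun C => (D ∩ C).Nonempty
  set W := ⋃₀ (I : Set (Set Plane))
  have hIP : I ⊆ P := filter_subset _ _
  have hDA : D ⊆ A := hQ.1.subset_of_mem hD
  have hDW : D ⊆ W := fun x hx => by
    obtain ⟨C, hC, hxC⟩ := hP.1.exists_mem_s4 (hDA hx)
    exact ⟨C, mem_filter.2 ⟨hC, x, hx, hxC⟩, hxC⟩
  have hDne : D.Nonempty := hQ.1.1 D hD
  have hIne : I.Nonempty := by
    obtain ⟨C, hC, -⟩ := hDW hDne.some_mem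
    exact ⟨C, hC⟩
  have hI2 : 1 < I.card := by
    by_contra! h
    obtain ⟨C, hIC⟩ := card_eq_one.1 (le_antisymm h hIne.card_pos)
    refine hDP C (hIP (hIC ▸ mem_singleton_self C)) ?_
    simpa [W, hIC] using hDW
  have hW : IsPartition W {W} := .singleton (hDne.mono hDW)
  have hpieces : IsPartition (⋃₀ ↑({D} : Finset (Set Plane))) (I.image (D ∩ ·)) := by
    simpa using hP.1.trace hDA
  have hQ' := hQ.1.sdiff_union (singleton_subset_iff.2 hD) hpieces
  have hexchange : cost η {W} + cost η (I.image (D ∩ ·)) ≤ cost η I + cost η {D} := by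
    rw [cost_singleton, cost_singleton, cost_image_of_injOn (hP.1.injOn_inter_s4 D), cost]
    linarith [perim_sUnion_add_sum_perim_inter_le hIne
      (fun C hC => hA.subset (hP.1.subset_of_mem (hIP hC))) (hA.subset hDA)
      (fun C hC => (mem_filter.1 hC).2)]
  have hcost : cost η (P \ I ∪ {W}) ≤ cost η P := by
    linarith [hP.1.cost_sdiff_union hIP hW (η := η),
      hQ.1.cost_sdiff_union (singleton_subset_iff.2 hD) hpieces (η := η), hQ.2 _ hQ']
  refine ⟨P \ I ∪ {W}, ⟨hP.1.sdiff_union hIP hW, fun R hR => hcost.trans (hP.2 R hR)⟩, ?_,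
    fun C hC => ?_⟩
  · calc (P \ I ∪ {W}).card ≤ (P \ I).card + 1 := card_union_le _ _
      _ < P.card := by rw [card_sdiff_of_subset hIP]; have := card_le_card hIP; omega
  · by_cases hCI : C ∈ I
    · exact ⟨W, mem_union_right _ (mem_singleton_self W), Set.subset_sUnion_of_mem hCI⟩
    · exact ⟨C, mem_union_left _ (mem_sdiff.2 ⟨hC, hCI⟩), subset_rfl⟩

theorem IsMaximalOptimal.exists_superset (hA : A.Finite) (hP : IsMaximalOptimal η A P)
    (hQ : IsOptimalPartition η A Q) : ∀ D ∈ Q, ∃ C ∈ P, D ⊆ C := by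
  intro D hD
  by_contra! h
  exact hP.2 (hP.1.exists_coarser_of_not_subset hA hQ hD h)

theorem exists_isOptimalPartition (hA : A.Finite) (hAne : A.Nonempty) (η : ℝ) :
    ∃ P, IsOptimalPartition η A P := by
  obtain ⟨P, hP, hmin⟩ := Set.exists_min_image _ (cost η) (IsPartition.finite_setOf hA)
    ⟨{A}, .singleton hAne⟩
  exact ⟨P, hP, hmin⟩

theorem exists_isMaximalOptimal (hA : A.Finite) (hAne : A.Nonempty) (η : ℝ) :
    ∃ P, IsMaximalOptimal η A P := by
  obtain ⟨P, hP, hmin⟩ := Set.exists_min_image {P | IsOptimalPartition η A P} card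
    ((IsPartition.finite_setOf hA).subset fun P hP => hP.1) (exists_isOptimalPartition hA hAne η)
  exact ⟨P, hP, fun ⟨Q, hQ, hlt, _⟩ => (hmin Q hQ).not_gt hlt⟩

theorem maximal_optimal_partition_exists_unique_general
    (A : Set Plane) (hA : A.Finite) (hAne : A.Nonempty) (η : ℝ) :
    (∃ P : Finset (Set Plane), IsMaximalOptimal η A P) ∧
    (∀ P Q : Finset (Set Plane),
      IsMaximalOptimal η A P → IsMaximalOptimal η A Q → P = Q) :=
  ⟨exists_isMaximalOptimal hA hAne η, fun _ _ hP hQ =>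
    hP.1.1.eq_of_forall_exists_subset hQ.1.1 (hQ.exists_superset hA hP.1)
      (hP.exists_superset hA hQ.1)⟩

/-- existence and uniqueness of the maximal optimal partition. -/
theorem maximal_optimal_partition_exists_unique
    (A : Set Plane) (hA : A.Finite) (hAne : A.Nonempty) (η : ℝ) (hη : 0 < η) :
    (∃ P : Finset (Set Plane), IsMaximalOptimal η A P) ∧
    (∀ P Q : Finset (Set Plane),
      IsMaximalOptimal η A P → IsMaximalOptimal η A Q → P = Q) :=
  maximal_optimal_partition_exists_unique_general A hA hAne η

end
end
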